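/- arXiv:1004.1376 — 2 statements merged into one kernel-verified Lean document; each statement's English description precedes it below -/
import Mathlib

section
/- Let s' : Q → H be another section of j with s'(1) = 1, let τ' be its associated cocycle, and let T'^{[ρ]}_q : V_ρ → V_{q([ρ])} be another choice of intertwiners for s' (satisfying ρ(s'(q)·g·s'(q)⁻¹) = (T'^{[ρ]}_q)⁻¹ ∘ q([ρ])(g) ∘ T'^{[ρ]}_q for all g ∈ G and T'^{[ρ]}_1 = id), with associated scalar cocycle c'. Then c and c' are cohomologous: there exists a function b : Ĝ × Q → ℂ× with b([ρ],1) = 1 such that c'^{[ρ]}(q₁,q₂) = c^{[ρ]}(q₁,q₂) · b([ρ],q₁) · b(q₁([ρ]),q₂) · b([ρ],q₁q₂)⁻¹ for all [ρ] ∈ Ĝ and q₁, q₂ ∈ Q. -/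
noncomputable section

/-- A representation is irreducible if the space is nonzero and has no nontrivial invariant
subspace. -/
def IsIrredRep {K V : Type} [Group K] [AddCommGroup V] [Module ℂ V]
    (ρ : Representation ℂ K V) : Prop :=
  Nontrivial V ∧
    ∀ W : Submodule ℂ V, (∀ (k : K), ∀ v ∈ W, ρ k v ∈ W) → W = ⊥ ∨ W = ⊤

/-- Two representations are isomorphic if there is an intertwining linear equivalence. -/
def RepIso {K V W : Type} [Group K] [AddCommGroup V] [Module ℂ V]
    [AddCommGroup W] [Module ℂ W]
    (ρ : Representation ℂ K V) (σ : Representation ℂ K W) : Prop :=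
  ∃ e : V ≃ₗ[ℂ] W, ∀ (k : K) (v : V), e (ρ k v) = σ k (e v)

/-- The representation `g ↦ ρ (h·g·h⁻¹)` of the (normal) kernel of `j`, for `h : H`. -/
def conjRep {H Q : Type} [Group H] [Group Q] (j : H →* Q) {V : Type}
    [AddCommGroup V] [Module ℂ V] (ρ : Representation ℂ j.ker V) (h : H) :
    Representation ℂ j.ker V :=
  MonoidHom.comp ρ (MulAut.conjNormal h).toMonoidHom

/-- `τ(q₁,q₂) := s q₁ * s q₂ * (s (q₁ q₂))⁻¹`, an element of `G = ker j`. -/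
def tau {H Q : Type} [Group H] [Group Q] (j : H →* Q) (s : Q → H)
    (hs : ∀ q, j (s q) = q) (q₁ q₂ : Q) : j.ker :=
  ⟨s q₁ * s q₂ * (s (q₁ * q₂))⁻¹, by simp [MonoidHom.mem_ker, hs, mul_assoc]⟩

/-- Transport along an equality of indices, as a linear map. -/
def castHom {Ghat : Type} (V : Ghat → Type) [∀ r, AddCommGroup (V r)]
    [∀ r, Module ℂ (V r)] {a b : Ghat} (h : a = b) : V a →ₗ[ℂ] V b where
  toFun v := cast (congrArg V h) v
  map_add' := by subst h; intros; rfl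
  map_smul' := by subst h; intros; rfl

lemma castHom_injective {Ghat : Type} (V : Ghat → Type) [∀ r, AddCommGroup (V r)]
    [∀ r, Module ℂ (V r)] {a b : Ghat} (h : a = b) :
    Function.Injective (castHom V h) := by
  subst h
  intro x y hxy
  exact hxy

/-- Schur-type lemma: two intertwiners from a representation `σ` to an irreducible
representation `π`, one of which is an equivalence, differ by a scalar. -/
lemma schur_scalar {K V W : Type} [Group K] [AddCommGroup V] [Module ℂ V]
    [AddCommGroup W] [Module ℂ W] [FiniteDimensional ℂ W]
    (σ : Representation ℂ K V) (π : Representation ℂ K W) (hπ : IsIrredRep π)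
    (E : V ≃ₗ[ℂ] W) (hE : ∀ k v, E (σ k v) = π k (E v))
    (A : V →ₗ[ℂ] W) (hA : ∀ k v, A (σ k v) = π k (A v)) :
    ∃ lam : ℂ, ∀ v, A v = lam • E v := by
  have : Nontrivial W := hπ.1
  set f : Module.End ℂ W := A ∘ₗ (E.symm : W →ₗ[ℂ] V) with hf
  obtain ⟨lam, hlam⟩ := Module.End.exists_eigenvalue f
  have hcomm : ∀ (k : K) (w : W), f (π k w) = π k (f w) := by
    intro k w
    have h1 : E.symm (π k w) = σ k (E.symm w) := by
      apply E.injective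
      rw [hE]
      simp
    simp only [hf, LinearMap.comp_apply, LinearEquiv.coe_coe, h1, hA]
  have hinv : ∀ (k : K), ∀ w ∈ Module.End.eigenspace f lam,
      π k w ∈ Module.End.eigenspace f lam := by
    intro k w hw
    rw [Module.End.mem_eigenspace_iff] at hw ⊢
    rw [hcomm, hw, map_smul]
  rcases hπ.2 _ hinv with hbot | htop
  · exact absurd hbot (Module.End.hasEigenvalue_iff.mp hlam)
  · refine ⟨lam, fun v => ?_⟩
    have hv : E v ∈ Module.End.eigenspace f lam := htop ▸ Submodule.mem_top
    rw [Module.End.mem_eigenspace_iff] at hv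
    simpa [hf] using hv

/-- If `s'` is another section of `j` with `s' 1 = 1`, with associated cocycle
`τ'` and intertwiners `T'` (with scalar cocycle `c'`), then `c` and `c'` are cohomologous:
there is `b : Ĝ × Q → ℂ×` with `b([ρ],1) = 1` and
`c'^{[ρ]}(q₁,q₂) = c^{[ρ]}(q₁,q₂)·b([ρ],q₁)·b(q₁([ρ]),q₂)·b([ρ],q₁q₂)⁻¹`. -/
theorem stmt5 {H Q : Type} [Group H] [Group Q] [Fintype H] [Fintype Q]
    (j : H →* Q) (hj : Function.Surjective j)
    (s : Q → H) (hs : ∀ q, j (s q) = q) (hs1 : s 1 = 1)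
    {Ghat : Type} [Fintype Ghat]
    (V : Ghat → Type) [∀ r, AddCommGroup (V r)] [∀ r, Module ℂ (V r)]
    [∀ r, FiniteDimensional ℂ (V r)]
    (ρ : ∀ r, Representation ℂ j.ker (V r))
    (hirr : ∀ r, IsIrredRep (ρ r))
    (hdist : ∀ r r', RepIso (ρ r) (ρ r') → r = r')
    (act : Q → Ghat → Ghat)
    (hact : ∀ q r, RepIso (conjRep j (ρ r) (s q)) (ρ (act q r)))
    (hact1 : ∀ r, act 1 r = r)
    (hactmul : ∀ (q₁ q₂ : Q) (r : Ghat), act q₂ (act q₁ r) = act (q₁ * q₂) r)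
    (T : ∀ (q : Q) (r : Ghat), V r ≃ₗ[ℂ] V (act q r))
    (hT : ∀ (q : Q) (r : Ghat) (g : j.ker) (v : V r),
      T q r (conjRep j (ρ r) (s q) g v) = ρ (act q r) g (T q r v))
    (hT1 : ∀ (r : Ghat) (v : V r), T 1 r v = castHom V (hact1 r).symm v)
    (c : Ghat → Q → Q → ℂ)
    (hcdef : ∀ (r : Ghat) (q₁ q₂ : Q) (v : V r),
      T q₂ (act q₁ r) (T q₁ r v) =
        c r q₁ q₂ • castHom V (hactmul q₁ q₂ r).symm
          (T (q₁ * q₂) r (ρ r ((tau j s hs q₁ q₂)⁻¹) v)))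
    -- the second section `s'`, its intertwiners `T'` and scalar cocycle `c'`
    (s' : Q → H) (hs' : ∀ q, j (s' q) = q) (hs'1 : s' 1 = 1)
    (T' : ∀ (q : Q) (r : Ghat), V r ≃ₗ[ℂ] V (act q r))
    (hT' : ∀ (q : Q) (r : Ghat) (g : j.ker) (v : V r),
      T' q r (conjRep j (ρ r) (s' q) g v) = ρ (act q r) g (T' q r v))
    (hT'1 : ∀ (r : Ghat) (v : V r), T' 1 r v = castHom V (hact1 r).symm v)
    (c' : Ghat → Q → Q → ℂ)
    (hc'def : ∀ (r : Ghat) (q₁ q₂ : Q) (v : V r),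
      T' q₂ (act q₁ r) (T' q₁ r v) =
        c' r q₁ q₂ • castHom V (hactmul q₁ q₂ r).symm
          (T' (q₁ * q₂) r (ρ r ((tau j s' hs' q₁ q₂)⁻¹) v))) :
    ∃ b : Ghat → Q → ℂ,
      (∀ r q, b r q ≠ 0) ∧ (∀ r, b r 1 = 1) ∧
      ∀ (r : Ghat) (q₁ q₂ : Q),
        c' r q₁ q₂ = c r q₁ q₂ * b r q₁ * b (act q₁ r) q₂ * (b r (q₁ * q₂))⁻¹ := by
  classical
  -- the "difference" of the two sections, as an element of the kernel
  set g : Q → j.ker := fun q => ⟨s' q * (s q)⁻¹, by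
    simp [MonoidHom.mem_ker, hs, hs']⟩ with hg
  -- By Schur, `T' q r ∘ ρ r (g q)` is a scalar multiple of `T q r`.
  have key : ∀ (r : Ghat) (q : Q), ∃ lam : ℂ,
      ∀ v : V r, T' q r (ρ r (g q) v) = lam • T q r v := by
    intro r q
    have hA : ∀ (k : j.ker) (v : V r),
        ((T' q r : V r →ₗ[ℂ] V (act q r)) ∘ₗ (ρ r (g q)))
          (conjRep j (ρ r) (s q) k v)
          = ρ (act q r) k
            (((T' q r : V r →ₗ[ℂ] V (act q r)) ∘ₗ (ρ r (g q))) v) := by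
      intro k v
      have hker : g q * MulAut.conjNormal (s q) k
          = MulAut.conjNormal (s' q) k * g q := by
        ext
        push_cast [hg, MulAut.conjNormal_apply]
        group
      have h2 : (ρ r) (g q) ((ρ r) (MulAut.conjNormal (s q) k) v)
          = (ρ r) (MulAut.conjNormal (s' q) k) ((ρ r) (g q) v) := by
        rw [← Module.End.mul_apply, ← map_mul, hker, map_mul, Module.End.mul_apply]
      simp only [LinearMap.comp_apply, conjRep, MonoidHom.comp_apply,
        MulEquiv.toMonoidHom_eq_coe, MonoidHom.coe_coe]
      rw [h2]
      exact hT' q r k ((ρ r) (g q) v)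
    obtain ⟨lam, hlam⟩ := schur_scalar (conjRep j (ρ r) (s q)) (ρ (act q r))
      (hirr (act q r)) (T q r) (hT q r)
      ((T' q r : V r →ₗ[ℂ] V (act q r)) ∘ₗ (ρ r (g q))) hA
    exact ⟨lam, fun v => hlam v⟩
  choose b hb using key
  -- a nonzero vector in each `V r`
  have hex : ∀ r : Ghat, ∃ v : V r, v ≠ 0 := by
    intro r
    have : Nontrivial (V r) := (hirr r).1
    exact exists_ne 0
  choose v₀ hv₀ using hex
  -- `ρ` inverses
  have hρinv : ∀ (r : Ghat) (x : j.ker) (v : V r), ρ r x (ρ r x⁻¹ v) = v := by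
    intro r x v
    rw [← Module.End.mul_apply, ← map_mul, mul_inv_cancel, map_one,
      Module.End.one_apply]
  -- the inverted form of `hb`
  have hb' : ∀ (r : Ghat) (q : Q) (u : V r),
      T' q r u = b r q • T q r (ρ r (g q)⁻¹ u) := by
    intro r q u
    have := hb r q (ρ r (g q)⁻¹ u)
    rwa [hρinv] at this
  have hρinv' : ∀ (r : Ghat) (x : j.ker) (v : V r), ρ r x⁻¹ (ρ r x v) = v := by
    intro r x v
    rw [← Module.End.mul_apply, ← map_mul, inv_mul_cancel, map_one,
      Module.End.one_apply]
  -- nonvanishing of `b`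
  have hbne : ∀ r q, b r q ≠ 0 := by
    intro r q hzero
    have h1 := hb r q (v₀ r)
    rw [hzero, zero_smul] at h1
    have h2 : ρ r (g q) (v₀ r) = 0 := (T' q r).map_eq_zero_iff.mp h1
    have h3 := congrArg (ρ r (g q)⁻¹) h2
    rw [map_zero, hρinv'] at h3
    exact hv₀ r h3
  -- `b r 1 = 1`
  have hb1 : ∀ r, b r 1 = 1 := by
    intro r
    have hg1 : g 1 = 1 := by
      ext
      simp [hg, hs1, hs'1]
    have h1 := hb r 1 (v₀ r)
    rw [hg1, map_one, Module.End.one_apply, hT'1, hT1] at h1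
    have h2 : castHom V (hact1 r).symm (v₀ r) ≠ 0 := by
      intro h
      exact hv₀ r (castHom_injective V (hact1 r).symm (by rw [h, map_zero]))
    have h3 : b r 1 • castHom V (hact1 r).symm (v₀ r)
        = (1 : ℂ) • castHom V (hact1 r).symm (v₀ r) := by
      rw [one_smul]; exact h1.symm
    exact smul_left_injective ℂ h2 h3
  refine ⟨b, hbne, hb1, fun r q₁ q₂ => ?_⟩
  -- main cocycle computation
  -- the crucial kernel identity
  have hker : (tau j s hs q₁ q₂)⁻¹
        * (MulAut.conjNormal (s q₁) (g q₂)⁻¹ * (g q₁)⁻¹)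
      = (g (q₁ * q₂))⁻¹ * (tau j s' hs' q₁ q₂)⁻¹ := by
    ext
    push_cast [hg, tau, MulAut.conjNormal_apply]
    group
  -- compute `T' q₂ (act q₁ r) (T' q₁ r v₀)` in two ways
  have lhs1 : T' q₂ (act q₁ r) (T' q₁ r (v₀ r))
      = (c' r q₁ q₂ * b r (q₁ * q₂)) • castHom V (hactmul q₁ q₂ r).symm
          (T (q₁ * q₂) r (ρ r ((g (q₁ * q₂))⁻¹ * (tau j s' hs' q₁ q₂)⁻¹) (v₀ r))) := by
    rw [hc'def, hb' r (q₁ * q₂), map_smul, smul_smul,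
      ← Module.End.mul_apply, ← map_mul]
  have lhs2 : T' q₂ (act q₁ r) (T' q₁ r (v₀ r))
      = (c r q₁ q₂ * (b r q₁ * b (act q₁ r) q₂)) • castHom V (hactmul q₁ q₂ r).symm
          (T (q₁ * q₂) r (ρ r ((g (q₁ * q₂))⁻¹ * (tau j s' hs' q₁ q₂)⁻¹) (v₀ r))) := by
    rw [hb' r q₁, map_smul, hb' (act q₁ r) q₂, smul_smul]
    have step1 : ρ (act q₁ r) (g q₂)⁻¹ (T q₁ r (ρ r (g q₁)⁻¹ (v₀ r)))
        = T q₁ r (ρ r (MulAut.conjNormal (s q₁) (g q₂)⁻¹ * (g q₁)⁻¹) (v₀ r)) := by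
      rw [← hT q₁ r (g q₂)⁻¹]
      simp only [conjRep, MonoidHom.comp_apply, MulEquiv.toMonoidHom_eq_coe,
        MonoidHom.coe_coe]
      rw [map_mul, Module.End.mul_apply]
    rw [step1, hcdef, ← Module.End.mul_apply, ← map_mul, hker, smul_smul]
    ring_nf
  -- the transported vector is nonzero
  have hXne : castHom V (hactmul q₁ q₂ r).symm
      (T (q₁ * q₂) r (ρ r ((g (q₁ * q₂))⁻¹ * (tau j s' hs' q₁ q₂)⁻¹) (v₀ r))) ≠ 0 := by
    intro h
    have h1 : T (q₁ * q₂) r (ρ r ((g (q₁ * q₂))⁻¹ * (tau j s' hs' q₁ q₂)⁻¹) (v₀ r))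
        = 0 := castHom_injective V (hactmul q₁ q₂ r).symm (by rw [h, map_zero])
    have h2 : ρ r ((g (q₁ * q₂))⁻¹ * (tau j s' hs' q₁ q₂)⁻¹) (v₀ r) = 0 :=
      (T (q₁ * q₂) r).map_eq_zero_iff.mp h1
    have h3 := congrArg (ρ r ((g (q₁ * q₂))⁻¹ * (tau j s' hs' q₁ q₂)⁻¹)⁻¹) h2
    rw [map_zero, hρinv'] at h3
    exact hv₀ r h3
  have hscal : c' r q₁ q₂ * b r (q₁ * q₂) = c r q₁ q₂ * (b r q₁ * b (act q₁ r) q₂) :=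
    smul_left_injective ℂ hXne (lhs1.symm.trans lhs2)
  have h12 : b r (q₁ * q₂) ≠ 0 := hbne r (q₁ * q₂)
  field_simp
  linear_combination hscal
end
end

section
/- Fix q ∈ Q and a function a : G → ℂ satisfying a(g₀·g) = a(g·s(q)g₀s(q)⁻¹) for all g, g₀ ∈ G. Then for every [ρ] ∈ Ĝ: (1) if q([ρ]) = [ρ], the operator (∑_{g∈G} a(g)·ρ(g)) ∘ (T_q^{[ρ]})⁻¹ ∈ End(V_ρ) is a scalar multiple of the identity; (2) if q([ρ]) ≠ [ρ], then ∑_{g∈G} a(g)·ρ(g) = 0. -/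
noncomputable section

/-- Schur: an endomorphism commuting with an irreducible representation is scalar. -/
lemma schur_scalar_s13 {K V : Type} [Group K] [AddCommGroup V] [Module ℂ V]
    [FiniteDimensional ℂ V] (ρ : Representation ℂ K V) (hρ : IsIrredRep ρ)
    (B : V →ₗ[ℂ] V) (hB : ∀ g v, B (ρ g v) = ρ g (B v)) :
    ∃ lam : ℂ, B = lam • (LinearMap.id : V →ₗ[ℂ] V) := by
  haveI : Nontrivial V := hρ.1
  obtain ⟨μ, hμ⟩ := Module.End.exists_eigenvalue (B : Module.End ℂ V)
  refine ⟨μ, ?_⟩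
  have hW : Module.End.eigenspace (B : Module.End ℂ V) μ = ⊤ := by
    rcases hρ.2 (Module.End.eigenspace (B : Module.End ℂ V) μ) (fun k v hv => by
      rw [Module.End.mem_eigenspace_iff] at hv ⊢
      rw [hB, hv, map_smul]) with h | h
    · exact absurd h hμ
    · exact h
  ext v
  have : v ∈ Module.End.eigenspace (B : Module.End ℂ V) μ := hW ▸ Submodule.mem_top
  rw [Module.End.mem_eigenspace_iff] at this
  simpa using this

/-- Schur: a nonzero intertwiner between irreducible representations is an isomorphism. -/
lemma schur_hom {K V W : Type} [Group K] [AddCommGroup V] [Module ℂ V]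
    [AddCommGroup W] [Module ℂ W]
    (ρ : Representation ℂ K V) (σ : Representation ℂ K W)
    (hρ : IsIrredRep ρ) (hσ : IsIrredRep σ)
    (B : V →ₗ[ℂ] W) (hB : ∀ g v, B (ρ g v) = σ g (B v)) (hB0 : B ≠ 0) :
    RepIso ρ σ := by
  have hker : LinearMap.ker B = ⊥ := by
    rcases hρ.2 (LinearMap.ker B) (fun k v hv => by
      rw [LinearMap.mem_ker] at hv ⊢
      rw [hB, hv, map_zero]) with h | h
    · exact h
    · exact absurd (LinearMap.ker_eq_top.mp h) hB0
  have hrange : LinearMap.range B = ⊤ := by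
    rcases hσ.2 (LinearMap.range B) (fun k w hw => by
      obtain ⟨v, rfl⟩ := hw
      exact ⟨ρ k v, hB k v⟩) with h | h
    · exact absurd (LinearMap.range_eq_bot.mp h) hB0
    · exact h
  have hbij : Function.Bijective B :=
    ⟨LinearMap.ker_eq_bot.mp hker, LinearMap.range_eq_top.mp hrange⟩
  exact ⟨LinearEquiv.ofBijective B hbij, fun k v => hB k v⟩

lemma castHom_comm {K : Type} [Group K] {Ghat : Type} (V : Ghat → Type)
    [∀ r, AddCommGroup (V r)] [∀ r, Module ℂ (V r)]
    (ρ : ∀ r, Representation ℂ K (V r)) {a b : Ghat} (h : a = b) (g : K) (v : V a) :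
    castHom V h (ρ a g v) = ρ b g (castHom V h v) := by
  subst h; rfl

/-- **Lemmas 5.2/5.3.** Fix `q ∈ Q` and a function `a : G → ℂ` with
`a(g₀·g) = a(g·(s q)g₀(s q)⁻¹)` for all `g, g₀ ∈ G`.  Then for every `[ρ] ∈ Ĝ`:
(1) if `q([ρ]) = [ρ]`, the operator `(∑_g a(g)·ρ(g)) ∘ (T_q^{[ρ]})⁻¹ ∈ End(V_ρ)` is a scalar
multiple of the identity;
(2) if `q([ρ]) ≠ [ρ]`, then `∑_g a(g)·ρ(g) = 0`. -/
theorem stmt13 {H Q : Type} [Group H] [Group Q] [Fintype H] [Fintype Q]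
    (j : H →* Q) [Fintype j.ker] (hj : Function.Surjective j)
    (s : Q → H) (hs : ∀ q, j (s q) = q) (hs1 : s 1 = 1)
    {Ghat : Type} [Fintype Ghat]
    (V : Ghat → Type) [∀ r, AddCommGroup (V r)] [∀ r, Module ℂ (V r)]
    [∀ r, FiniteDimensional ℂ (V r)]
    (ρ : ∀ r, Representation ℂ j.ker (V r))
    (hirr : ∀ r, IsIrredRep (ρ r))
    (hdist : ∀ r r', RepIso (ρ r) (ρ r') → r = r')
    (act : Q → Ghat → Ghat)
    (hact : ∀ q r, RepIso (conjRep j (ρ r) (s q)) (ρ (act q r)))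
    (hact1 : ∀ r, act 1 r = r)
    (hactmul : ∀ (q₁ q₂ : Q) (r : Ghat), act q₂ (act q₁ r) = act (q₁ * q₂) r)
    (T : ∀ (q : Q) (r : Ghat), V r ≃ₗ[ℂ] V (act q r))
    (hT : ∀ (q : Q) (r : Ghat) (g : j.ker) (v : V r),
      T q r (conjRep j (ρ r) (s q) g v) = ρ (act q r) g (T q r v))
    (q : Q) (a : j.ker → ℂ)
    (ha : ∀ g g₀ : j.ker, a (g₀ * g) = a (g * (MulAut.conjNormal (s q) g₀))) :
    (∀ (r : Ghat) (h : act q r = r),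
      ∃ lam : ℂ,
        ((∑ g : j.ker, a g • (ρ r g : V r →ₗ[ℂ] V r)) ∘ₗ
            (T q r).symm.toLinearMap ∘ₗ castHom V h.symm) =
          lam • (LinearMap.id : V r →ₗ[ℂ] V r)) ∧
    (∀ r : Ghat, act q r ≠ r →
      (∑ g : j.ker, a g • (ρ r g : V r →ₗ[ℂ] V r)) = 0) := by
  set c : j.ker ≃* j.ker := (MulAut.conjNormal (s q) : MulAut j.ker) with hc
  -- The basic intertwining identity for A r := ∑ a g • ρ r g
  have key : ∀ (r : Ghat) (g₀ : j.ker) (v : V r),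
      (∑ g : j.ker, a g • (ρ r g : V r →ₗ[ℂ] V r)) (ρ r (c g₀) v) =
      ρ r g₀ ((∑ g : j.ker, a g • (ρ r g : V r →ₗ[ℂ] V r)) v) := by
    intro r g₀ v
    have hL : (∑ g : j.ker, a g • (ρ r g : V r →ₗ[ℂ] V r)) (ρ r (c g₀) v) =
        ∑ g : j.ker, a g • ρ r (g * c g₀) v := by
      rw [LinearMap.sum_apply]
      refine Finset.sum_congr rfl fun g _ => ?_
      rw [LinearMap.smul_apply, map_mul]
      rfl
    have hR : ρ r g₀ ((∑ g : j.ker, a g • (ρ r g : V r →ₗ[ℂ] V r)) v) =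
        ∑ g : j.ker, a g • ρ r (g₀ * g) v := by
      rw [LinearMap.sum_apply, map_sum]
      refine Finset.sum_congr rfl fun g _ => ?_
      rw [LinearMap.smul_apply, map_smul, map_mul]
      rfl
    rw [hL, hR]
    refine Fintype.sum_equiv ((Equiv.mulRight (c g₀)).trans (Equiv.mulLeft g₀⁻¹))
      _ _ fun g => ?_
    simp only [Equiv.trans_apply, Equiv.coe_mulLeft, Equiv.coe_mulRight]
    have h2 : a (g₀⁻¹ * (g * c g₀)) = a g := by
      rw [ha]
      simp
    rw [h2, mul_inv_cancel_left]
  -- B r : V (act q r) →ₗ V r intertwines ρ (act q r) and ρ r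
  have keyB : ∀ (r : Ghat) (g : j.ker) (v : V (act q r)),
      ((∑ g : j.ker, a g • (ρ r g : V r →ₗ[ℂ] V r)) ∘ₗ (T q r).symm.toLinearMap)
        (ρ (act q r) g v) =
      ρ r g (((∑ g : j.ker, a g • (ρ r g : V r →ₗ[ℂ] V r)) ∘ₗ
        (T q r).symm.toLinearMap) v) := by
    intro r g v
    have hsymm : (T q r).symm (ρ (act q r) g v) = ρ r (c g) ((T q r).symm v) := by
      apply (T q r).injective
      rw [LinearEquiv.apply_symm_apply]
      have := hT q r g ((T q r).symm v)
      rw [LinearEquiv.apply_symm_apply] at this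
      exact this.symm
    simp only [LinearMap.comp_apply, LinearEquiv.coe_coe, hsymm]
    exact key r g ((T q r).symm v)
  constructor
  · intro r h
    set B := (∑ g : j.ker, a g • (ρ r g : V r →ₗ[ℂ] V r)) ∘ₗ
      (T q r).symm.toLinearMap with hB
    have hC : ∀ (g : j.ker) (v : V r),
        (B ∘ₗ castHom V h.symm) (ρ r g v) = ρ r g ((B ∘ₗ castHom V h.symm) v) := by
      intro g v
      simp only [LinearMap.comp_apply]
      rw [castHom_comm V ρ h.symm, keyB]
    obtain ⟨lam, hlam⟩ := schur_scalar_s13 (ρ r) (hirr r) (B ∘ₗ castHom V h.symm) hC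
    exact ⟨lam, by rw [← LinearMap.comp_assoc, ← hB, hlam]⟩
  · intro r h
    set B := (∑ g : j.ker, a g • (ρ r g : V r →ₗ[ℂ] V r)) ∘ₗ
      (T q r).symm.toLinearMap with hB
    by_cases hB0 : B = 0
    · ext v
      have : (∑ g : j.ker, a g • (ρ r g : V r →ₗ[ℂ] V r)) v = B (T q r v) := by
        simp [hB]
      rw [LinearMap.zero_apply, this, hB0, LinearMap.zero_apply]
    · exact absurd (hdist _ _ (schur_hom (ρ (act q r)) (ρ r) (hirr (act q r))
        (hirr r) B (keyB r) hB0)) h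
end
end
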